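/- Let s = b + c(p−1) and r = s + p^t(p−1)d with t ≥ 2, d ≥ 1, 2 ≤ b ≤ p, 0 ≤ c ≤ p−1, 0 ≤ m < p−1, s ≥ m, and let l be an integer with 0 ≤ l ≤ m. Assume further 0 ≤ b−m+p−1 ≤ c, and set c_0 = p^{2m−b−(p−1)} · C(r−l, b−m+p−1) / C(r−l, r−m) (a rational number). Then: (1) ν_p( C(r−l, b−m+p−1) ) equals 0 if 0 ≤ l ≤ m−c+1, equals 1 if m−c+2 ≤ l ≤ b−c+p, and equals 0 if b−c+p+1 ≤ l ≤ b−c+2p; and (2) ν_p(c_0) equals: 2m−b−(p−1) if b−c+p−1 ≤ m ≤ b−c+p and 0 ≤ l ≤ m−c+1; 2m−b−(p−1)−1 if b−c+p+1 ≤ m ≤ b−c+2p and 0 ≤ l ≤ m−c+1; 2m−b−(p−1)+1 if b−c+p−1 ≤ m ≤ b−c+p and m−c+2 ≤ l ≤ b−c+p; 2m−b−(p−1) if b−c+p+1 ≤ m ≤ b−c+2p and m−c+2 ≤ l ≤ b−c+p; 2m−b−(p−1) if b−c+p+1 ≤ m ≤ b−c+2p and b−c+p+1 ≤ l ≤ b−c+2p.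 -/

import Mathlib

/-- Binomial coefficient of integers with the convention `iC n k = 0` when `k < 0` or `k > n`. -/
def iC (n k : ℤ) : ℤ := if 0 ≤ k ∧ k ≤ n then (n.toNat.choose k.toNat : ℤ) else 0

/-!
Write `r - l = d₀ + p w` with `0 ≤ d₀ < p`. For `k < p` the factorial `k!` is prime to `p`, so
`ν_p C(r - l, k) = Σ_{i<k} ν_p(r - l - i)`, and of these factors only `r - l - d₀ = p w` can be
divisible by `p`; hence `ν_p C(r - l, k)` is `1 + ν_p(w)` if `d₀ < k` and `0` otherwise.
If `l ≤ b - c + p` then `d₀ = p + b - c - l` and, as `t ≥ 2`, `w ≡ c - 1 (mod p)` is prime to `p`;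
otherwise `d₀ = 2p + b - c - l` is at least both lower indices. This gives part (1) and, since
`C(r - l, r - m) = C(r - l, m - l)`, the valuation of the denominator of `c₀` as well.
-/

theorem iC_natCast (n k : ℕ) : iC n k = n.choose k := by
  simp only [iC, Int.toNat_natCast, Nat.cast_nonneg, Nat.cast_le, true_and, ite_eq_left_iff,
    not_le]
  intro hnk
  rw [Nat.choose_eq_zero_of_lt hnk, Nat.cast_zero]

theorem iC_ne_zero {n k : ℤ} (hk : 0 ≤ k) (hkn : k ≤ n) : iC n k ≠ 0 := by
  lift k to ℕ using hk
  lift n to ℕ using (Nat.cast_nonneg k).trans hkn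
  rw [iC_natCast]
  exact_mod_cast (Nat.choose_pos (by omega)).ne'

theorem iC_symm (n k : ℤ) : iC n (n - k) = iC n k := by
  by_cases h : 0 ≤ k ∧ k ≤ n
  · obtain ⟨hk, hkn⟩ := h
    lift k to ℕ using hk
    lift n to ℕ using (Nat.cast_nonneg k).trans hkn
    rw [show (n : ℤ) - k = ((n - k : ℕ) : ℤ) by omega, iC_natCast, iC_natCast,
      Nat.choose_symm (by omega)]
  · rw [iC, iC, if_neg h, if_neg (by omega)]

theorem padicValInt_add_mul_eq_zero {p : ℕ} {a x : ℤ} (ha : 0 < a) (hap : a < p) :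
    padicValInt p (a + p * x) = 0 :=
  padicValInt.eq_zero_of_not_dvd fun h => by
    have := Int.le_of_dvd ha ((dvd_add_left (dvd_mul_right _ _)).mp h)
    omega

theorem padicValNat_sub_of_lt {p n i : ℕ} (hip : i < p) (hin : i ≤ n) :
    padicValNat p (n - i) = if i = n % p then padicValNat p (n - n % p) else 0 := by
  split_ifs with hi
  · rw [hi]
  · refine padicValNat.eq_zero_of_not_dvd fun hdvd => hi ?_
    rw [← (Nat.modEq_iff_dvd' hin).mpr hdvd, Nat.mod_eq_of_lt hip]

section Prime

variable {p : ℕ} [hp : Fact p.Prime]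

theorem padicValNat_descFactorial_of_lt {n k : ℕ} (hkp : k < p) (hkn : k ≤ n) :
    padicValNat p (n.descFactorial k) = if n % p < k then padicValNat p (n - n % p) else 0 := by
  induction k with
  | zero => simp
  | succ k ih =>
    rw [Nat.descFactorial_succ, padicValNat.mul (by omega)
      (Nat.descFactorial_pos.mpr (by omega)).ne', padicValNat_sub_of_lt (by omega) (by omega),
      ih (by omega) (by omega)]
    split_ifs <;> omega

theorem padicValNat_choose_of_lt {n k : ℕ} (hkp : k < p) (hkn : k ≤ n) :
    padicValNat p (n.choose k) = if n % p < k then padicValNat p (n - n % p) else 0 := by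
  have hfact : padicValNat p k.factorial = 0 :=
    padicValNat.eq_zero_of_not_dvd fun h => by have := (hp.out.dvd_factorial).mp h; omega
  rw [← padicValNat_descFactorial_of_lt hkp hkn, Nat.descFactorial_eq_factorial_mul_choose,
    padicValNat.mul k.factorial_ne_zero (Nat.choose_pos hkn).ne', hfact, zero_add]

theorem padicValInt_iC_of_lt {n d₀ w k : ℤ} (hn : n = d₀ + p * w)
    (hd₀ : 0 ≤ d₀) (hd₀p : d₀ < p) (hw : 0 < w) (hk : 0 ≤ k) (hkp : k < p) :
    padicValInt p (iC n k) = if d₀ < k then padicValInt p w + 1 else 0 := by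
  lift d₀ to ℕ using hd₀
  lift w to ℕ using hw.le
  lift k to ℕ using hk
  have hN : n = ((d₀ + p * w : ℕ) : ℤ) := by push_cast; exact hn
  have hpw : p ≤ p * w := Nat.le_mul_of_pos_right p (by omega)
  have hmod : (d₀ + p * w) % p = d₀ := by
    rw [Nat.add_mul_mod_self_left, Nat.mod_eq_of_lt (by exact_mod_cast hd₀p)]
  rw [hN, iC_natCast, padicValInt.of_nat, padicValInt.of_nat,
    padicValNat_choose_of_lt (by omega) (by omega), hmod, Nat.add_sub_cancel_left,
    padicValNat.mul hp.out.ne_zero (by omega), padicValNat_self]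
  simp only [Nat.cast_lt]
  split_ifs <;> omega

theorem padicValRat_zpow_mul_div (e : ℤ) {x y : ℤ} (hx : x ≠ 0) (hy : y ≠ 0) :
    padicValRat p ((p : ℚ) ^ e * x / y) = e + padicValInt p x - padicValInt p y := by
  have hx' : (x : ℚ) ≠ 0 := Int.cast_ne_zero.mpr hx
  have hy' : (y : ℚ) ≠ 0 := Int.cast_ne_zero.mpr hy
  have hp' : (p : ℚ) ≠ 0 := by exact_mod_cast hp.out.ne_zero
  rw [mul_div_assoc, padicValRat.mul (zpow_ne_zero _ hp') (div_ne_zero hx' hy'),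
    padicValRat.div hx' hy', padicValRat.zpow, padicValRat.self hp.out.one_lt,
    padicValRat.of_int, padicValRat.of_int, mul_one, add_sub_assoc]

end Prime

theorem stmt_14_general (p : ℕ) (hp : p.Prime)
    (b c m l s r : ℤ) (t d : ℕ)
    (ht : 2 ≤ t) (hb2 : 2 ≤ b) (hcp : c ≤ (p : ℤ) - 1) (hmp : m < (p : ℤ) - 1)
    (hs : s = b + c * ((p : ℤ) - 1))
    (hr : r = s + (p : ℤ) ^ t * ((p : ℤ) - 1) * (d : ℤ))
    (hl0 : 0 ≤ l) (hlm : l ≤ m) (hbmc : b - m + (p : ℤ) - 1 ≤ c)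
    (c₀ : ℚ)
    (hc₀ : c₀ = (p : ℚ) ^ (2 * m - b - ((p : ℤ) - 1)) *
      (iC (r - l) (b - m + (p : ℤ) - 1) : ℚ) / (iC (r - l) (r - m) : ℚ)) :
    ((0 ≤ l ∧ l ≤ m - c + 1) → padicValInt p (iC (r - l) (b - m + (p : ℤ) - 1)) = 0) ∧
    ((m - c + 2 ≤ l ∧ l ≤ b - c + p) → padicValInt p (iC (r - l) (b - m + (p : ℤ) - 1)) = 1) ∧
    ((b - c + p + 1 ≤ l ∧ l ≤ b - c + 2 * p) →
      padicValInt p (iC (r - l) (b - m + (p : ℤ) - 1)) = 0) ∧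
    ((b - c + p - 1 ≤ m ∧ m ≤ b - c + p ∧ 0 ≤ l ∧ l ≤ m - c + 1) →
      padicValRat p c₀ = 2 * m - b - ((p : ℤ) - 1)) ∧
    ((b - c + p + 1 ≤ m ∧ m ≤ b - c + 2 * p ∧ 0 ≤ l ∧ l ≤ m - c + 1) →
      padicValRat p c₀ = 2 * m - b - ((p : ℤ) - 1) - 1) ∧
    ((b - c + p - 1 ≤ m ∧ m ≤ b - c + p ∧ m - c + 2 ≤ l ∧ l ≤ b - c + p) →
      padicValRat p c₀ = 2 * m - b - ((p : ℤ) - 1) + 1) ∧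
    ((b - c + p + 1 ≤ m ∧ m ≤ b - c + 2 * p ∧ m - c + 2 ≤ l ∧ l ≤ b - c + p) →
      padicValRat p c₀ = 2 * m - b - ((p : ℤ) - 1)) ∧
    ((b - c + p + 1 ≤ m ∧ m ≤ b - c + 2 * p ∧ b - c + p + 1 ≤ l ∧ l ≤ b - c + 2 * p) →
      padicValRat p c₀ = 2 * m - b - ((p : ℤ) - 1)) := by
  have := Fact.mk hp
  obtain ⟨u, rfl⟩ : ∃ u, t = u + 2 := ⟨t - 2, by omega⟩
  have hcb : b + 1 ≤ c := by omega
  have hE : 0 ≤ (p : ℤ) ^ u * ((p : ℤ) - 1) * d :=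
    mul_nonneg (mul_nonneg (by positivity) (by omega)) (by positivity)
  set w := c - 1 + p * ((p : ℤ) ^ u * ((p : ℤ) - 1) * d) with hw
  have hw2 : 2 ≤ w := by linarith [mul_nonneg (Nat.cast_nonneg p) hE]
  have hrl : r - l = (p + b - c - l) + p * w := by rw [hr, hs, hw]; ring
  have hrl' : r - l = (2 * p + b - c - l) + p * (w - 1) := by rw [hrl]; ring
  have hvw : padicValInt p w = 0 := padicValInt_add_mul_eq_zero (by omega) (by omega)
  have hval (k : ℤ) (hk : 0 ≤ k) (hkp : k < p) (hkd : k ≤ 2 * p + b - c - l) :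
      padicValInt p (iC (r - l) k) = if l ≤ b - c + p ∧ p + b - c - l < k then 1 else 0 := by
    by_cases hl : l ≤ b - c + p
    · rw [padicValInt_iC_of_lt hrl (by omega) (by omega) (by omega) hk hkp, hvw]
      simp [hl]
    · rw [padicValInt_iC_of_lt hrl' (by omega) (by omega) (by omega) hk hkp]
      simp only [hl, false_and, if_false, ite_eq_right_iff]
      omega
  have hnum := hval (b - m + p - 1) (by omega) (by omega) (by omega)
  have hden := hval (m - l) (by omega) (by omega) (by omega)
  rw [← iC_symm, show r - l - (m - l) = r - m by ring] at hden
  have hprl : (p : ℤ) ≤ r - l := by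
    nlinarith [le_mul_of_one_le_right (Nat.cast_nonneg p) (by omega : 1 ≤ w)]
  have hc₀' : padicValRat p c₀ = 2 * m - b - ((p : ℤ) - 1) +
      padicValInt p (iC (r - l) (b - m + p - 1)) - padicValInt p (iC (r - l) (r - m)) :=
    hc₀ ▸ padicValRat_zpow_mul_div _ (iC_ne_zero (by omega) (by omega))
      (iC_ne_zero (by omega) (by omega))
  refine ⟨?_, ?_, ?_, ?_, ?_, ?_, ?_, ?_⟩ <;> intro h <;> simp only [hc₀', hnum, hden] <;>
    split_ifs <;> push_cast <;> omega

/-- **Lemma 3.6 (B).** Let `p` be an odd prime, `s = b + c(p−1)`, `r = s + p^t(p−1)d` with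
`t ≥ 2`, `d ≥ 1`, `2 ≤ b ≤ p`, `0 ≤ c ≤ p−1`, `0 ≤ m < p−1`, `s ≥ m`, `0 ≤ l ≤ m`, and
`0 ≤ b−m+p−1 ≤ c`. Set `c₀ = p^{2m−b−(p−1)}·C(r−l, b−m+p−1)/C(r−l, r−m) ∈ ℚ`. Then
`ν_p(C(r−l, b−m+p−1))` equals `0`, `1`, `0` on the listed ranges of `l`, and `ν_p(c₀)`
takes the stated values in the five listed cases. -/
theorem stmt_14 (p : ℕ) (hp : p.Prime) (hodd : Odd p)
    (b c m l s r : ℤ) (t d : ℕ)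
    (ht : 2 ≤ t) (hd : 1 ≤ d)
    (hb2 : 2 ≤ b) (hbp : b ≤ (p : ℤ)) (hc0 : 0 ≤ c) (hcp : c ≤ (p : ℤ) - 1)
    (hm0 : 0 ≤ m) (hmp : m < (p : ℤ) - 1)
    (hs : s = b + c * ((p : ℤ) - 1))
    (hr : r = s + (p : ℤ) ^ t * ((p : ℤ) - 1) * (d : ℤ))
    (hms : m ≤ s) (hl0 : 0 ≤ l) (hlm : l ≤ m)
    (hbm0 : 0 ≤ b - m + (p : ℤ) - 1) (hbmc : b - m + (p : ℤ) - 1 ≤ c)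
    (c₀ : ℚ)
    (hc₀ : c₀ = (p : ℚ) ^ (2 * m - b - ((p : ℤ) - 1)) *
      (iC (r - l) (b - m + (p : ℤ) - 1) : ℚ) / (iC (r - l) (r - m) : ℚ)) :
    ((0 ≤ l ∧ l ≤ m - c + 1) → padicValInt p (iC (r - l) (b - m + (p : ℤ) - 1)) = 0) ∧
    ((m - c + 2 ≤ l ∧ l ≤ b - c + p) → padicValInt p (iC (r - l) (b - m + (p : ℤ) - 1)) = 1) ∧
    ((b - c + p + 1 ≤ l ∧ l ≤ b - c + 2 * p) →
      padicValInt p (iC (r - l) (b - m + (p : ℤ) - 1)) = 0) ∧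
    ((b - c + p - 1 ≤ m ∧ m ≤ b - c + p ∧ 0 ≤ l ∧ l ≤ m - c + 1) →
      padicValRat p c₀ = 2 * m - b - ((p : ℤ) - 1)) ∧
    ((b - c + p + 1 ≤ m ∧ m ≤ b - c + 2 * p ∧ 0 ≤ l ∧ l ≤ m - c + 1) →
      padicValRat p c₀ = 2 * m - b - ((p : ℤ) - 1) - 1) ∧
    ((b - c + p - 1 ≤ m ∧ m ≤ b - c + p ∧ m - c + 2 ≤ l ∧ l ≤ b - c + p) →
      padicValRat p c₀ = 2 * m - b - ((p : ℤ) - 1) + 1) ∧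
    ((b - c + p + 1 ≤ m ∧ m ≤ b - c + 2 * p ∧ m - c + 2 ≤ l ∧ l ≤ b - c + p) →
      padicValRat p c₀ = 2 * m - b - ((p : ℤ) - 1)) ∧
    ((b - c + p + 1 ≤ m ∧ m ≤ b - c + 2 * p ∧ b - c + p + 1 ≤ l ∧ l ≤ b - c + 2 * p) →
      padicValRat p c₀ = 2 * m - b - ((p : ℤ) - 1)) :=
  stmt_14_general p hp b c m l s r t d ht hb2 hcp hmp hs hr hl0 hlm hbmc c₀ hc₀
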